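/- Let T be large, let 2 ≤ v ≤ ℓ, and let r ≥ 0 be an integer. Then Σ_{m,n} r!² g(m) g(n) / lcm(m,n) ≤ 2^r r! P_v^r exp(P_v), where the sum runs over pairs of positive integers m, n all of whose prime factors lie in [T_{v−1}, T_v) and which satisfy Ω(m) = Ω(n) = r. -/

import Mathlib

open scoped Classical

/-- The `j`-fold iterated logarithm: `iterLog 0 x = x`, `iterLog (j+1) x = log (iterLog j x)`. -/
noncomputable def iterLog : ℕ → ℝ → ℝ
  | 0, x => x
  | n + 1, x => Real.log (iterLog n x)

/-- The sequence `T_j`: `T_1 = e^2` and `T_j = exp(log T / (log_j T)^2)` for `j ≥ 2`. -/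
noncomputable def Tseq (T : ℝ) (j : ℕ) : ℝ :=
  if j = 1 then Real.exp 2 else Real.exp (Real.log T / (iterLog j T) ^ 2)

/-- A prime `p` lies in the range `[T_{j-1}, T_j)`. -/
def InRange (T : ℝ) (j : ℕ) (p : ℕ) : Prop :=
  Tseq T (j - 1) ≤ (p : ℝ) ∧ (p : ℝ) < Tseq T j

/-- `P_j = ∑_{T_{j-1} ≤ p < T_j} 1/p`, sum over primes. -/
noncomputable def Pv (T : ℝ) (j : ℕ) : ℝ :=
  ∑' p : ℕ, if p.Prime ∧ InRange T j p then (1 : ℝ) / p else 0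

/-- `𝒫_j(s) = ∑_{T_{j-1} ≤ p < T_j} p^{-s}`, sum over primes. -/
noncomputable def Pcal (T : ℝ) (j : ℕ) (s : ℂ) : ℂ :=
  ∑' p : ℕ, if p.Prime ∧ InRange T j p then (p : ℂ) ^ (-s) else 0

/-- `Ω(n)`: number of prime factors of `n` with multiplicity. -/
def Omega (n : ℕ) : ℕ := n.primeFactorsList.length

/-- The multiplicative function with `g(p^m) = 1/m!`. -/
noncomputable def gfun (n : ℕ) : ℝ :=
  ∏ p ∈ n.primeFactors, (1 : ℝ) / (Nat.factorial (n.factorization p))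

/-- The Dirichlet polynomial `N_j(s; α) = ∑ α^{Ω(n)} g(n) n^{-s}` over `n ≥ 1` whose prime
factors all lie in `[T_{j-1}, T_j)` and with `Ω(n) ≤ 500 P_j`. -/
noncomputable def Ncal (T : ℝ) (j : ℕ) (s : ℂ) (α : ℂ) : ℂ :=
  ∑' n : ℕ,
    if 1 ≤ n ∧ (∀ p : ℕ, p.Prime → p ∣ n → InRange T j p) ∧ (Omega n : ℝ) ≤ 500 * Pv T j
    then α ^ Omega n * (gfun n : ℂ) * (n : ℂ) ^ (-s) else 0

/-- `L` is the largest integer with `log_L T ≥ 10^4`. -/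
def IsLargestIterLogIndex (T : ℝ) (L : ℕ) : Prop :=
  (10 ^ 4 : ℝ) ≤ iterLog L T ∧ ∀ m : ℕ, L < m → iterLog m T < 10 ^ 4

/-- Hardy's function `Z(t) = π^{-it/2} Γ(1/4 + it/2)/|Γ(1/4 + it/2)| · ζ(1/2 + it)`. -/
noncomputable def hardyZ (t : ℝ) : ℂ :=
  (Real.pi : ℂ) ^ (-(Complex.I * (t : ℂ)) / 2) *
    (Complex.Gamma (1 / 4 + Complex.I * t / 2) /
      ((‖Complex.Gamma (1 / 4 + Complex.I * t / 2)‖ : ℝ) : ℂ)) *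
    riemannZeta (1 / 2 + Complex.I * t)

/-- `σ_{z₁,z₂}(n) = ∑_{ab = n} a^{-z₁} b^{-z₂}`. -/
noncomputable def sigmaz (z1 z2 : ℂ) (n : ℕ) : ℂ :=
  ∑ d ∈ n.divisors, (d : ℂ) ^ (-z1) * ((n / d : ℕ) : ℂ) ^ (-z2)

/-- `B_{z₁,z₂,z₃,z₄}(n)`. -/
noncomputable def Bfun (z1 z2 z3 z4 : ℂ) (n : ℕ) : ℂ :=
  ∏ p ∈ n.primeFactors,
    (∑' j : ℕ, sigmaz z1 z2 (p ^ (j + n.factorization p)) * sigmaz z3 z4 (p ^ j) / (p : ℂ) ^ j) *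
      (∑' j : ℕ, sigmaz z1 z2 (p ^ j) * sigmaz z3 z4 (p ^ j) / (p : ℂ) ^ j)⁻¹

section Aux

lemma Omega_one : Omega 1 = 0 := by simp [Omega]

lemma Omega_mul {a b : ℕ} (ha : a ≠ 0) (hb : b ≠ 0) :
    Omega (a * b) = Omega a + Omega b := by
  unfold Omega
  rw [(Nat.perm_primeFactorsList_mul ha hb).length_eq, List.length_append]

lemma Omega_prime {p : ℕ} (hp : p.Prime) : Omega p = 1 := by
  simp [Omega, Nat.primeFactorsList_prime hp]

lemma Omega_eq_zero {m : ℕ} (hm : 1 ≤ m) (h : Omega m = 0) : m = 1 := by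
  unfold Omega at h
  rcases (Nat.primeFactorsList_eq_nil m).mp (List.length_eq_zero_iff.mp h) with h0 | h1
  · omega
  · exact h1

lemma Omega_eq_sum {m : ℕ} (hm : m ≠ 0) :
    Omega m = ∑ p ∈ m.primeFactors, m.factorization p := by
  have h2 := Multiset.toFinset_sum_count_eq (↑m.primeFactorsList : Multiset ℕ)
  simp only [Multiset.coe_count, Multiset.coe_card] at h2
  rw [Omega, ← h2]
  exact Finset.sum_congr rfl fun p _ => Nat.primeFactorsList_count_eq

lemma gfun_nonneg (n : ℕ) : 0 ≤ gfun n :=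
  Finset.prod_nonneg fun p _ => by positivity

lemma gfun_one : gfun 1 = 1 := by simp [gfun]

lemma gfun_eq_prod_subset {n : ℕ} {U : Finset ℕ} (hU : n.primeFactors ⊆ U) :
    gfun n = ∏ p ∈ U, (1 : ℝ) / (Nat.factorial (n.factorization p)) := by
  unfold gfun
  refine Finset.prod_subset hU fun p _ hp => ?_
  have h0 : n.factorization p = 0 := by
    rwa [← Finsupp.notMem_support_iff, Nat.support_factorization]
  simp [h0]

lemma gfun_div_prime {m p : ℕ} (hm : m ≠ 0) (hp : p ∈ m.primeFactors) :
    gfun (m / p) = (m.factorization p : ℝ) * gfun m := by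
  have hpp : p.Prime := Nat.prime_of_mem_primeFactors hp
  have hpd : p ∣ m := Nat.dvd_of_mem_primeFactors hp
  have hsub : (m / p).primeFactors ⊆ m.primeFactors :=
    Nat.primeFactors_mono (Nat.div_dvd_of_dvd hpd) hm
  have hfac : (m / p).factorization = m.factorization - Finsupp.single p 1 := by
    rw [Nat.factorization_div hpd, hpp.factorization]
  have ha : 1 ≤ m.factorization p := by
    rw [← Nat.Prime.pow_dvd_iff_le_factorization hpp hm, pow_one]; exact hpd
  obtain ⟨b, hb⟩ : ∃ b, m.factorization p = b + 1 := ⟨m.factorization p - 1, by omega⟩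
  have key : ∀ q ∈ m.primeFactors.erase p, (m / p).factorization q = m.factorization q := by
    intro q hq
    have hqp : q ≠ p := Finset.ne_of_mem_erase hq
    rw [hfac, Finsupp.tsub_apply, Finsupp.single_eq_of_ne hqp, Nat.sub_zero]
  have h1 : (m / p).factorization p = b := by
    rw [hfac, Finsupp.tsub_apply, Finsupp.single_eq_same, hb]; omega
  rw [gfun_eq_prod_subset hsub, gfun, ← Finset.mul_prod_erase _ _ hp, ← Finset.mul_prod_erase _ _ hp]
  rw [Finset.prod_congr rfl fun q hq => by rw [key q hq]]
  rw [h1, hb]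
  have hbne : (Nat.factorial b : ℝ) ≠ 0 := by positivity
  rw [Nat.factorial_succ]
  push_cast
  field_simp

lemma gfun_sum_div {m : ℕ} (hm : m ≠ 0) :
    ∑ p ∈ m.primeFactors, gfun (m / p) = (Omega m : ℝ) * gfun m := by
  rw [Finset.sum_congr rfl fun p hp => gfun_div_prime hm hp, Omega_eq_sum hm, ← Finset.sum_mul]
  push_cast
  ring

end Aux

def CondS (S : Finset ℕ) (r m : ℕ) : Prop :=
  1 ≤ m ∧ (∀ p : ℕ, p.Prime → p ∣ m → p ∈ S) ∧ Omega m = r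

section CondAux

variable {S : Finset ℕ}

lemma condS_one : CondS S 0 1 :=
  ⟨le_refl 1, fun p hp hpd => absurd (Nat.dvd_one.mp hpd) hp.ne_one, Omega_one⟩

lemma condS_mul (hSp : ∀ p ∈ S, p.Prime) {p m r : ℕ} (hp : p ∈ S) (h : CondS S r m) :
    CondS S (r + 1) (p * m) := by
  have hpp := hSp p hp
  have hm0 : m ≠ 0 := by have := h.1; omega
  refine ⟨Nat.one_le_iff_ne_zero.mpr (mul_ne_zero hpp.ne_zero hm0), ?_, ?_⟩
  · intro q hq hqd
    rcases (Nat.Prime.dvd_mul hq).mp hqd with h1 | h2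
    · rwa [(Nat.prime_dvd_prime_iff_eq hq hpp).mp h1]
    · exact h.2.1 q hq h2
  · rw [Omega_mul hpp.ne_zero hm0, Omega_prime hpp, h.2.2, add_comm]

lemma condS_div {p m r : ℕ} (hpp : p.Prime) (hpd : p ∣ m) (h : CondS S (r + 1) m) :
    CondS S r (m / p) := by
  have hm0 : m ≠ 0 := by have := h.1; omega
  have hple : p ≤ m := Nat.le_of_dvd h.1 hpd
  have hdp : 1 ≤ m / p := (Nat.one_le_div_iff hpp.pos).mpr hple
  refine ⟨hdp, ?_, ?_⟩
  · intro q hq hqd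
    exact h.2.1 q hq (hqd.trans (Nat.div_dvd_of_dvd hpd))
  · have hO := Omega_mul hpp.ne_zero (show m / p ≠ 0 by omega)
    rw [Nat.mul_div_cancel' hpd] at hO
    have := h.2.2
    rw [Omega_prime hpp] at hO
    omega

lemma condS_le {B r m : ℕ} (hSB : ∀ p ∈ S, p ≤ B) (h : CondS S r m) : m ≤ B ^ r := by
  have hm0 : m ≠ 0 := by have := h.1; omega
  calc m = m.primeFactorsList.prod := (Nat.prod_primeFactorsList hm0).symm
    _ ≤ B ^ m.primeFactorsList.length := List.prod_le_pow_card _ _ (fun x hx =>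
        hSB x (h.2.1 x (Nat.prime_of_mem_primeFactorsList hx)
          (Nat.dvd_of_mem_primeFactorsList hx)))
    _ = B ^ r := by rw [show m.primeFactorsList.length = Omega m from rfl, h.2.2]

lemma tuple_expand (hSp : ∀ p ∈ S, p.Prime) :
    ∀ (r N : ℕ), (∀ m, CondS S r m → m ≤ N) → ∀ F : ℕ → ℝ,
      (∑ m ∈ Finset.Icc 1 N, if CondS S r m then (Nat.factorial r : ℝ) * gfun m * F m else 0)
        = ∑ f : Fin r → {x // x ∈ S}, F (∏ i, ((f i : ℕ))) := by
  intro r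
  induction r with
  | zero =>
    intro N hN F
    have h1N : 1 ≤ N := hN 1 condS_one
    have hcond : ∀ m, CondS S 0 m ↔ m = 1 := by
      intro m
      constructor
      · rintro ⟨h1, -, h0⟩; exact Omega_eq_zero h1 h0
      · rintro rfl; exact condS_one
    have hL : (∑ m ∈ Finset.Icc 1 N, if CondS S 0 m then (Nat.factorial 0 : ℝ) * gfun m * F m else 0)
        = F 1 := by
      have hcg : ∀ m ∈ Finset.Icc 1 N,
          (if CondS S 0 m then (Nat.factorial 0 : ℝ) * gfun m * F m else 0)
          = if m = 1 then F 1 else 0 := by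
        intro m _
        by_cases h : m = 1
        · subst h
          rw [if_pos ((hcond 1).mpr rfl), if_pos rfl, gfun_one]
          simp
        · rw [if_neg (fun hc => h ((hcond m).mp hc)), if_neg h]
      rw [Finset.sum_congr rfl hcg, Finset.sum_ite_eq' (Finset.Icc 1 N) 1 (fun _ => F 1),
        if_pos (by simp [h1N])]
    rw [hL]
    have : ∀ f : Fin 0 → {x // x ∈ S}, F (∏ i, ((f i : ℕ))) = F 1 := by
      intro f; simp
    rw [Finset.sum_congr rfl fun f _ => this f]
    rw [Finset.sum_const]
    have hcard : (Finset.univ : Finset (Fin 0 → {x // x ∈ S})).card = 1 := by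
      simp [Finset.card_univ]
    rw [hcard, one_smul]
  | succ r IH =>
    intro N hN F
    by_cases hSe : S.Nonempty
    · -- key pointwise identity
      have key : ∀ m ∈ Finset.Icc 1 N,
          (if CondS S (r + 1) m then (Nat.factorial (r + 1) : ℝ) * gfun m * F m else 0)
          = ∑ p ∈ S, (if p ∣ m ∧ CondS S r (m / p)
              then (Nat.factorial r : ℝ) * gfun (m / p) * F m else 0) := by
        intro m _
        by_cases hc : CondS S (r + 1) m
        · rw [if_pos hc]
          symm
          have hm0 : m ≠ 0 := by have := hc.1; omega
          have hiff : ∀ p ∈ S, (p ∣ m ∧ CondS S r (m / p)) ↔ p ∈ m.primeFactors := by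
            intro p hp
            constructor
            · rintro ⟨hpd, -⟩
              exact Nat.mem_primeFactors.mpr ⟨hSp p hp, hpd, hm0⟩
            · intro hpf
              exact ⟨Nat.dvd_of_mem_primeFactors hpf,
                condS_div (Nat.prime_of_mem_primeFactors hpf) (Nat.dvd_of_mem_primeFactors hpf) hc⟩
          have hsubS : m.primeFactors ⊆ S := fun q hq =>
            hc.2.1 q (Nat.prime_of_mem_primeFactors hq) (Nat.dvd_of_mem_primeFactors hq)
          calc ∑ p ∈ S, (if p ∣ m ∧ CondS S r (m / p)
                  then (Nat.factorial r : ℝ) * gfun (m / p) * F m else 0)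
              = ∑ p ∈ S, (if p ∈ m.primeFactors
                  then (Nat.factorial r : ℝ) * gfun (m / p) * F m else 0) :=
                Finset.sum_congr rfl fun p hp => if_congr (hiff p hp) rfl rfl
            _ = ∑ p ∈ S ∩ m.primeFactors, (Nat.factorial r : ℝ) * gfun (m / p) * F m := by
                rw [Finset.sum_ite_mem]
            _ = ∑ p ∈ m.primeFactors, (Nat.factorial r : ℝ) * gfun (m / p) * F m := by
                rw [Finset.inter_eq_right.mpr hsubS]
            _ = ((Nat.factorial r : ℝ) * F m) * ∑ p ∈ m.primeFactors, gfun (m / p) := by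
                rw [Finset.mul_sum]; exact Finset.sum_congr rfl fun p _ => by ring
            _ = (Nat.factorial (r + 1) : ℝ) * gfun m * F m := by
                rw [gfun_sum_div hm0, hc.2.2, Nat.factorial_succ]
                push_cast
                ring
        · rw [if_neg hc]
          symm
          refine Finset.sum_eq_zero fun p hp => if_neg ?_
          rintro ⟨hpd, hcr⟩
          have := condS_mul hSp hp hcr
          rw [Nat.mul_div_cancel' hpd] at this
          exact hc this
      rw [Finset.sum_congr rfl key, Finset.sum_comm]
      have step2 : ∀ p ∈ S,
          (∑ m ∈ Finset.Icc 1 N, if p ∣ m ∧ CondS S r (m / p)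
              then (Nat.factorial r : ℝ) * gfun (m / p) * F m else 0)
          = ∑ m ∈ Finset.Icc 1 N, (if CondS S r m
              then (Nat.factorial r : ℝ) * gfun m * F (p * m) else 0) := by
        intro p hp
        have hpp := hSp p hp
        rw [← Finset.sum_filter, ← Finset.sum_filter]
        refine Finset.sum_nbij' (i := fun m => m / p) (j := fun m => p * m) ?_ ?_ ?_ ?_ ?_
        · intro m hm
          simp only [Finset.mem_filter, Finset.mem_Icc] at hm ⊢
          exact ⟨⟨hm.2.2.1, le_trans (Nat.div_le_self m p) hm.1.2⟩, hm.2.2⟩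
        · intro m hm
          simp only [Finset.mem_filter, Finset.mem_Icc] at hm ⊢
          have hc := condS_mul hSp hp hm.2
          refine ⟨⟨hc.1, hN _ hc⟩, Dvd.intro m rfl, ?_⟩
          rw [Nat.mul_div_cancel_left m hpp.pos]
          exact hm.2
        · intro m hm
          simp only [Finset.mem_filter, Finset.mem_Icc] at hm
          exact Nat.mul_div_cancel' hm.2.1
        · intro m hm
          exact Nat.mul_div_cancel_left m hpp.pos
        · intro m hm
          simp only [Finset.mem_filter, Finset.mem_Icc] at hm
          rw [Nat.mul_div_cancel' hm.2.1]
      rw [Finset.sum_congr rfl step2]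
      -- now RHS side
      have hIH : ∀ p ∈ S,
          (∑ m ∈ Finset.Icc 1 N, if CondS S r m
              then (Nat.factorial r : ℝ) * gfun m * F (p * m) else 0)
          = ∑ f : Fin r → {x // x ∈ S}, F (p * ∏ i, ((f i : ℕ))) := by
        intro p hp
        exact IH N (fun m hm => le_trans (Nat.le_mul_of_pos_left m (hSp p hp).pos)
          (hN _ (condS_mul hSp hp hm))) (fun m => F (p * m))
      rw [Finset.sum_congr rfl hIH]
      have hsplit : (∑ f : Fin (r + 1) → {x // x ∈ S}, F (∏ i, ((f i : ℕ))))
          = ∑ a : {x // x ∈ S}, ∑ f : Fin r → {x // x ∈ S}, F ((a : ℕ) * ∏ i, ((f i : ℕ))) := by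
        calc (∑ f : Fin (r + 1) → {x // x ∈ S}, F (∏ i, ((f i : ℕ))))
            = ∑ x : {x // x ∈ S} × (Fin r → {x // x ∈ S}), F ((x.1 : ℕ) * ∏ i, ((x.2 i : ℕ))) := by
              refine (Fintype.sum_equiv (Fin.consEquiv (fun _ => ({x // x ∈ S}))) _ _ fun x => ?_).symm
              have h2 : (∏ i, ((Fin.cons (α := fun _ => {x // x ∈ S}) x.1 x.2 i) : ℕ))
                  = (x.1 : ℕ) * ∏ i, ((x.2 i : ℕ)) := by
                rw [← Fin.prod_cons ((x.1 : ℕ)) (fun i => ((x.2 i : ℕ)))]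
                refine Finset.prod_congr rfl fun i _ => ?_
                refine Fin.cases ?_ ?_ i
                · simp
                · intro j; simp
              exact (show F ((x.1 : ℕ) * ∏ i, ((x.2 i : ℕ)))
                = F (∏ i, ((Fin.cons (α := fun _ => {x // x ∈ S}) x.1 x.2 i) : ℕ)) from congrArg F h2.symm)
          _ = ∑ a : {x // x ∈ S}, ∑ f : Fin r → {x // x ∈ S}, F ((a : ℕ) * ∏ i, ((f i : ℕ))) :=
              Fintype.sum_prod_type _
      rw [hsplit, ← Finset.sum_coe_sort S (fun p => ∑ f : Fin r → {x // x ∈ S}, F (p * ∏ i, ((f i : ℕ))))]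
    · have hSemp : S = ∅ := Finset.not_nonempty_iff_eq_empty.mp hSe
      haveI hXe : IsEmpty {x // x ∈ S} := ⟨fun x => hSe ⟨x.1, x.2⟩⟩
      haveI : IsEmpty (Fin (r + 1) → {x // x ∈ S}) := ⟨fun f => hXe.false (f 0)⟩
      rw [Finset.univ_eq_empty, Finset.sum_empty]
      refine Finset.sum_eq_zero fun m _ => if_neg ?_
      rintro ⟨h1, hsupp, hO⟩
      have hm1 : m ≠ 1 := fun h => by rw [h, Omega_one] at hO; omega
      obtain ⟨q, hq, hqd⟩ := Nat.exists_prime_and_dvd hm1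
      rw [hSemp] at hsupp
      exact absurd (hsupp q hq hqd) (by simp)

end CondAux

section Matching

lemma gcd_matching {ι : Type*} [DecidableEq ι] (f g : ι → ℕ)
    (hf : ∀ i, (f i).Prime) (hg : ∀ j, (g j).Prime) :
    ∀ I : Finset ι, ∀ J : Finset ι, ∃ (A : Finset ι) (σ : ι → ι), A ⊆ I ∧ Set.InjOn σ ↑A ∧
      (∀ i ∈ A, σ i ∈ J ∧ f i = g (σ i)) ∧
      Nat.gcd (∏ i ∈ I, f i) (∏ j ∈ J, g j) ∣ ∏ i ∈ A, f i := by
  intro I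
  induction I using Finset.induction_on with
  | empty =>
    intro J
    refine ⟨∅, id, Finset.Subset.refl _, ?_, ?_, ?_⟩
    · simp [Set.InjOn]
    · simp
    · simp
  | insert a s ha ih =>
    intro J
    have hm : (∏ i ∈ s, f i) ≠ 0 := (Finset.prod_pos fun i _ => (hf i).pos).ne'
    have hn : (∏ j ∈ J, g j) ≠ 0 := (Finset.prod_pos fun j _ => (hg j).pos).ne'
    rcases le_or_gt ((∏ j ∈ J, g j).factorization (f a))
        ((∏ i ∈ s, f i).factorization (f a)) with hle | hlt
    · obtain ⟨A, σ, hAs, hinj, hprop, hdvd⟩ := ih J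
      refine ⟨A, σ, hAs.trans (Finset.subset_insert a s), hinj, hprop, ?_⟩
      rw [Finset.prod_insert ha]
      have h0 : (f a) * ∏ i ∈ s, f i ≠ 0 := mul_ne_zero (hf a).ne_zero hm
      have hgcdeq : Nat.gcd ((f a) * ∏ i ∈ s, f i) (∏ j ∈ J, g j)
          = Nat.gcd (∏ i ∈ s, f i) (∏ j ∈ J, g j) := by
        have hne1 : Nat.gcd ((f a) * ∏ i ∈ s, f i) (∏ j ∈ J, g j) ≠ 0 :=
          (Nat.gcd_pos_of_pos_right _ (Nat.pos_of_ne_zero hn)).ne'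
        have hne2 : Nat.gcd (∏ i ∈ s, f i) (∏ j ∈ J, g j) ≠ 0 :=
          (Nat.gcd_pos_of_pos_right _ (Nat.pos_of_ne_zero hn)).ne'
        apply Nat.factorization_inj hne1 hne2
        rw [Nat.factorization_gcd h0 hn, Nat.factorization_gcd hm hn,
          Nat.factorization_mul (hf a).ne_zero hm]
        ext q
        rw [Finsupp.inf_apply, Finsupp.inf_apply, Finsupp.add_apply]
        rcases eq_or_ne q (f a) with rfl | hq
        · rw [(hf a).factorization, Finsupp.single_eq_same]
          omega
        · rw [(hf a).factorization, Finsupp.single_eq_of_ne hq]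
          simp
      rw [hgcdeq]
      exact hdvd
    · have hpd : f a ∣ ∏ j ∈ J, g j :=
        Nat.dvd_of_factorization_pos (by omega)
      obtain ⟨j, hjJ, hjd⟩ := (hf a).prime.exists_mem_finset_dvd hpd
      have hfg : f a = g j := (Nat.prime_dvd_prime_iff_eq (hf a) (hg j)).mp hjd
      obtain ⟨A, σ, hAs, hinj, hprop, hdvd⟩ := ih (J.erase j)
      have haA : a ∉ A := fun h => ha (hAs h)
      refine ⟨insert a A, Function.update σ a j, Finset.insert_subset_insert a hAs, ?_, ?_, ?_⟩
      · intro x hx y hy hxy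
        simp only [Finset.coe_insert, Set.mem_insert_iff, Finset.mem_coe] at hx hy
        rcases hx with rfl | hx <;> rcases hy with rfl | hy
        · rfl
        · exfalso
          have hya : y ≠ x := fun h => haA (by rw [← h]; exact hy)
          rw [Function.update_self, Function.update_of_ne hya j σ] at hxy
          exact Finset.ne_of_mem_erase (hprop y hy).1 hxy.symm
        · exfalso
          have hxa : x ≠ y := fun h => haA (by rw [← h]; exact hx)
          rw [Function.update_self, Function.update_of_ne hxa j σ] at hxy
          exact Finset.ne_of_mem_erase (hprop x hx).1 hxy
        · have hxa : x ≠ a := fun h => haA (by rw [← h]; exact hx)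
          have hya : y ≠ a := fun h => haA (by rw [← h]; exact hy)
          rw [Function.update_of_ne hxa j σ, Function.update_of_ne hya j σ] at hxy
          exact hinj hx hy hxy
      · intro i hi
        rcases Finset.mem_insert.mp hi with rfl | hiA
        · rw [Function.update_self]
          exact ⟨hjJ, hfg⟩
        · have hia : i ≠ a := fun h => haA (by rw [← h]; exact hiA)
          rw [Function.update_of_ne hia j σ]
          exact ⟨Finset.mem_of_mem_erase (hprop i hiA).1, (hprop i hiA).2⟩
      · rw [Finset.prod_insert ha, Finset.prod_insert haA,
          ← Finset.mul_prod_erase J g hjJ, ← hfg, Nat.gcd_mul_left]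
        exact mul_dvd_mul_left (f a) hdvd

end Matching

section Prescribe

lemma prescribe {ι X : Type*} [Fintype ι] [Fintype X] [DecidableEq ι] [DecidableEq X]
    (u : X → ℝ) (B : Finset ι) (h : ι → X) :
    (∑ g : ι → X, if ∀ j ∈ B, g j = h j then ∏ j, u (g j) else 0)
      = (∏ j ∈ B, u (h j)) * (∑ x : X, u x) ^ (Fintype.card ι - B.card) := by
  have hrw : ∀ g : ι → X, (if ∀ j ∈ B, g j = h j then ∏ j, u (g j) else 0)
      = ∏ j, (if j ∈ B then (if g j = h j then u (g j) else 0) else u (g j)) := by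
    intro g
    by_cases hc : ∀ j ∈ B, g j = h j
    · rw [if_pos hc]
      refine Finset.prod_congr rfl fun j _ => ?_
      by_cases hj : j ∈ B
      · rw [if_pos hj, if_pos (hc j hj)]
      · rw [if_neg hj]
    · rw [if_neg hc]
      push_neg at hc
      obtain ⟨j0, hj0, hj0'⟩ := hc
      refine (Finset.prod_eq_zero (Finset.mem_univ j0) ?_).symm
      rw [if_pos hj0, if_neg hj0']
  rw [Finset.sum_congr rfl fun g _ => hrw g]
  have hps := Finset.prod_univ_sum (fun _ : ι => (Finset.univ : Finset X))
    (fun j x => if j ∈ B then (if x = h j then u x else 0) else u x)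
  rw [Fintype.piFinset_univ] at hps
  rw [← hps, ← Finset.prod_mul_prod_compl B]
  congr 1
  · refine Finset.prod_congr rfl fun j hj => ?_
    have : ∀ x : X, (if j ∈ B then (if x = h j then u x else 0) else u x)
        = if x = h j then u x else 0 := fun x => if_pos hj
    rw [Finset.sum_congr rfl fun x _ => this x, Finset.sum_ite_eq' Finset.univ (h j) u,
      if_pos (Finset.mem_univ _)]
  · calc ∏ j ∈ Bᶜ, (∑ x : X, if j ∈ B then (if x = h j then u x else 0) else u x)
        = ∏ j ∈ Bᶜ, (∑ x : X, u x) := Finset.prod_congr rfl fun j hj =>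
          Finset.sum_congr rfl fun x _ => if_neg (Finset.mem_compl.mp hj)
      _ = (∑ x : X, u x) ^ (Fintype.card ι - B.card) := by
          rw [Finset.prod_const, Finset.card_compl]

lemma sum_prod_const {ι X : Type*} [Fintype ι] [DecidableEq ι] [Fintype X] (u : X → ℝ) :
    (∑ g : ι → X, ∏ j, u (g j)) = (∑ x : X, u x) ^ (Fintype.card ι) := by
  have hps := Finset.prod_univ_sum (fun _ : ι => (Finset.univ : Finset X)) (fun _ x => u x)
  rw [Fintype.piFinset_univ] at hps
  rw [← hps, Finset.prod_const, Finset.card_univ]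

end Prescribe

section Step2

lemma inner_eval {S : Finset ℕ} (hSp : ∀ p ∈ S, p.Prime) {r : ℕ} (A : Finset (Fin r))
    (e : {y // y ∈ A} ↪ Fin r) :
    (∑ f : Fin r → {x // x ∈ S}, ∑ g : Fin r → {x // x ∈ S},
        (if ∀ i : {y // y ∈ A}, g (e i) = f (i : Fin r) then
          ((∏ i ∈ A, ((f i : ℕ))) : ℝ) /
            (((∏ i, ((f i : ℕ))) : ℝ) * ((∏ i, ((g i : ℕ))) : ℝ)) else 0))
    = (∑ x : {x // x ∈ S}, (1 : ℝ) / ((x : ℕ) : ℝ)) ^ r *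
        (∑ x : {x // x ∈ S}, (1 : ℝ) / ((x : ℕ) : ℝ)) ^ (r - A.card) := by
  set u : {x // x ∈ S} → ℝ := fun x => (1 : ℝ) / ((x : ℕ) : ℝ) with hu
  have hxpos : ∀ x : {x // x ∈ S}, 0 < ((x : ℕ) : ℝ) := fun x => by
    exact_mod_cast (hSp _ x.2).pos
  have hprodinv : ∀ w : Fin r → {x // x ∈ S},
      (∏ j, u (w j)) = 1 / ((∏ i, ((w i : ℕ))) : ℝ) := by
    intro w
    rw [hu, one_div, ← Finset.prod_inv_distrib]
    exact Finset.prod_congr rfl fun j _ => one_div _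
  have hBcard : (Finset.univ.map e).card = A.card := by
    rw [Finset.card_map, Finset.card_univ, Fintype.card_coe]
  have hstep : ∀ f : Fin r → {x // x ∈ S},
      (∑ g : Fin r → {x // x ∈ S},
        (if ∀ i : {y // y ∈ A}, g (e i) = f (i : Fin r) then
          ((∏ i ∈ A, ((f i : ℕ))) : ℝ) /
            (((∏ i, ((f i : ℕ))) : ℝ) * ((∏ i, ((g i : ℕ))) : ℝ)) else 0))
      = (∏ j, u (f j)) * (∑ x : {x // x ∈ S}, u x) ^ (r - A.card) := by
    intro f
    set h : Fin r → {x // x ∈ S} :=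
      fun j => if hj : ∃ i : {y // y ∈ A}, e i = j then f ((hj.choose : Fin r)) else f j with hh
    have hhe : ∀ i : {y // y ∈ A}, h (e i) = f (i : Fin r) := by
      intro i
      have hex : ∃ i' : {y // y ∈ A}, e i' = e i := ⟨i, rfl⟩
      rw [hh]
      simp only [hex, dif_pos]
      congr 1
      have := hex.choose_spec
      have h2 : hex.choose = i := e.injective this
      rw [h2]
    have hcond : ∀ g : Fin r → {x // x ∈ S},
        (∀ i : {y // y ∈ A}, g (e i) = f (i : Fin r)) ↔
          (∀ j ∈ Finset.univ.map e, g j = h j) := by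
      intro g
      constructor
      · intro hc j hj
        obtain ⟨i, -, rfl⟩ := Finset.mem_map.mp hj
        rw [hc i, hhe i]
      · intro hc i
        have hj : e i ∈ Finset.univ.map e := Finset.mem_map_of_mem e (Finset.mem_univ i)
        rw [hc (e i) hj, hhe i]
    have hval : ∀ g : Fin r → {x // x ∈ S},
        ((∏ i ∈ A, ((f i : ℕ))) : ℝ) /
            (((∏ i, ((f i : ℕ))) : ℝ) * ((∏ i, ((g i : ℕ))) : ℝ))
        = (((∏ i ∈ A, ((f i : ℕ))) : ℝ) / ((∏ i, ((f i : ℕ))) : ℝ)) * ∏ j, u (g j) := by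
      intro g
      rw [hprodinv g, ← div_div, div_eq_mul_one_div]
    calc (∑ g : Fin r → {x // x ∈ S},
        (if ∀ i : {y // y ∈ A}, g (e i) = f (i : Fin r) then
          ((∏ i ∈ A, ((f i : ℕ))) : ℝ) /
            (((∏ i, ((f i : ℕ))) : ℝ) * ((∏ i, ((g i : ℕ))) : ℝ)) else 0))
        = ∑ g : Fin r → {x // x ∈ S},
            (((∏ i ∈ A, ((f i : ℕ))) : ℝ) / ((∏ i, ((f i : ℕ))) : ℝ)) *
              (if ∀ j ∈ Finset.univ.map e, g j = h j then ∏ j, u (g j) else 0) := by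
          refine Finset.sum_congr rfl fun g _ => ?_
          rw [mul_ite, mul_zero]
          exact if_congr (hcond g) (hval g) rfl
      _ = (((∏ i ∈ A, ((f i : ℕ))) : ℝ) / ((∏ i, ((f i : ℕ))) : ℝ)) *
            ((∏ j ∈ Finset.univ.map e, u (h j)) *
              (∑ x : {x // x ∈ S}, u x) ^ (Fintype.card (Fin r) - (Finset.univ.map e).card)) := by
          rw [← Finset.mul_sum]
          congr 1
          refine Eq.trans ?_ (prescribe u (Finset.univ.map e) h)
          exact Finset.sum_congr rfl fun g _ => by congr
      _ = (∏ j, u (f j)) * (∑ x : {x // x ∈ S}, u x) ^ (r - A.card) := by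
          rw [hBcard, Fintype.card_fin]
          have h1 : (∏ j ∈ Finset.univ.map e, u (h j)) = ∏ i ∈ A, u (f i) := by
            rw [Finset.prod_map]
            calc (∏ i : {y // y ∈ A}, u (h (e i))) = ∏ i : {y // y ∈ A}, u (f (i : Fin r)) :=
                  Finset.prod_congr rfl fun i _ => by rw [hhe i]
              _ = ∏ i ∈ A, u (f i) := Finset.prod_coe_sort A (fun i => u (f i))
          rw [h1, ← mul_assoc]
          congr 1
          have h2 : ((∏ i ∈ A, ((f i : ℕ))) : ℝ) * ∏ i ∈ A, u (f i) = 1 := by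
            rw [← Finset.prod_mul_distrib]
            refine Finset.prod_eq_one fun i _ => ?_
            rw [hu]
            exact mul_one_div_cancel (hxpos (f i)).ne'
          rw [div_mul_eq_mul_div, h2, hprodinv f]
  rw [Finset.sum_congr rfl fun f _ => hstep f, ← Finset.sum_mul, sum_prod_const u,
    Fintype.card_fin]

end Step2

set_option maxHeartbeats 1000000

section Assemble

lemma pair_sum_le {S : Finset ℕ} (hSp : ∀ p ∈ S, p.Prime) (r : ℕ) :
    (∑ f : Fin r → {x // x ∈ S}, ∑ g : Fin r → {x // x ∈ S},
        ((Nat.gcd (∏ i, ((f i : ℕ))) (∏ i, ((g i : ℕ))) : ℝ) /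
          (((∏ i, ((f i : ℕ))) : ℝ) * ((∏ i, ((g i : ℕ))) : ℝ))))
      ≤ ∑ j ∈ Finset.range (r + 1), (r.choose j : ℝ) * ((r.descFactorial j : ℝ) *
          ((∑ x : {x // x ∈ S}, (1 : ℝ) / ((x : ℕ) : ℝ)) ^ r *
           (∑ x : {x // x ∈ S}, (1 : ℝ) / ((x : ℕ) : ℝ)) ^ (r - j))) := by
  have hppos : ∀ w : Fin r → {x // x ∈ S}, (0:ℝ) < ∏ i, (((w i : ℕ)) : ℝ) := fun w =>
    Finset.prod_pos fun i _ => by exact_mod_cast (hSp _ (w i).2).pos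
  have hWnn : ∀ (x : Σ A : Finset (Fin r), ({y // y ∈ A} ↪ Fin r))
      (f g : Fin r → {x // x ∈ S}),
      (0:ℝ) ≤ (if ∀ i : {y // y ∈ x.1}, g (x.2 i) = f (i : Fin r) then
          ((∏ i ∈ x.1, ((f i : ℕ))) : ℝ) /
            (((∏ i, ((f i : ℕ))) : ℝ) * ((∏ i, ((g i : ℕ))) : ℝ)) else 0) := by
    intro x f g
    split
    · refine div_nonneg ?_ (le_of_lt (mul_pos (hppos f) (hppos g)))
      exact Finset.prod_nonneg fun i _ => by positivity
    · exact le_refl 0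
  have hpoint : ∀ f g : Fin r → {x // x ∈ S},
      ((Nat.gcd (∏ i, ((f i : ℕ))) (∏ i, ((g i : ℕ))) : ℝ) /
          (((∏ i, ((f i : ℕ))) : ℝ) * ((∏ i, ((g i : ℕ))) : ℝ)))
      ≤ ∑ x : Σ A : Finset (Fin r), ({y // y ∈ A} ↪ Fin r),
          (if ∀ i : {y // y ∈ x.1}, g (x.2 i) = f (i : Fin r) then
            ((∏ i ∈ x.1, ((f i : ℕ))) : ℝ) /
              (((∏ i, ((f i : ℕ))) : ℝ) * ((∏ i, ((g i : ℕ))) : ℝ)) else 0) := by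
    intro f g
    obtain ⟨A, σ, -, hinj, hprop, hdvd⟩ := gcd_matching (fun i => ((f i : ℕ)))
      (fun j => ((g j : ℕ))) (fun i => hSp _ (f i).2) (fun j => hSp _ (g j).2)
      Finset.univ Finset.univ
    let e : {y // y ∈ A} ↪ Fin r := ⟨fun i => σ (i : Fin r), fun i₁ i₂ hh =>
      Subtype.ext (hinj (Finset.mem_coe.mpr i₁.2) (Finset.mem_coe.mpr i₂.2) hh)⟩
    refine le_trans ?_ (Finset.single_le_sum (f := fun x => (if ∀ i : {y // y ∈ x.1},
        g (x.2 i) = f (i : Fin r) then ((∏ i ∈ x.1, ((f i : ℕ))) : ℝ) /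
        (((∏ i, ((f i : ℕ))) : ℝ) * ((∏ i, ((g i : ℕ))) : ℝ)) else 0))
      (fun x _ => hWnn x f g) (Finset.mem_univ (⟨A, e⟩ : Σ A : Finset (Fin r),
        ({y // y ∈ A} ↪ Fin r))))
    have hcpos : ∀ i : {y // y ∈ A}, g (e i) = f (i : Fin r) := by
      intro i
      exact Subtype.coe_injective ((hprop (i : Fin r) i.2).2).symm
    rw [if_pos hcpos]
    have hApos : 0 < ∏ i ∈ A, ((f i : ℕ)) :=
      Finset.prod_pos fun i _ => (hSp _ (f i).2).pos
    have hcast : ((Nat.gcd (∏ i, ((f i : ℕ))) (∏ i, ((g i : ℕ)))) : ℝ)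
        ≤ ((∏ i ∈ A, ((f i : ℕ))) : ℝ) := by
      have := Nat.le_of_dvd hApos hdvd
      exact_mod_cast this
    exact (div_le_div_iff_of_pos_right (mul_pos (hppos f) (hppos g))).mpr hcast
  calc (∑ f : Fin r → {x // x ∈ S}, ∑ g : Fin r → {x // x ∈ S},
        ((Nat.gcd (∏ i, ((f i : ℕ))) (∏ i, ((g i : ℕ))) : ℝ) /
          (((∏ i, ((f i : ℕ))) : ℝ) * ((∏ i, ((g i : ℕ))) : ℝ))))
      ≤ ∑ f : Fin r → {x // x ∈ S}, ∑ g : Fin r → {x // x ∈ S},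
          ∑ x : Σ A : Finset (Fin r), ({y // y ∈ A} ↪ Fin r),
          (if ∀ i : {y // y ∈ x.1}, g (x.2 i) = f (i : Fin r) then
            ((∏ i ∈ x.1, ((f i : ℕ))) : ℝ) /
              (((∏ i, ((f i : ℕ))) : ℝ) * ((∏ i, ((g i : ℕ))) : ℝ)) else 0) :=
        Finset.sum_le_sum fun f _ => Finset.sum_le_sum fun g _ => hpoint f g
    _ = ∑ x : Σ A : Finset (Fin r), ({y // y ∈ A} ↪ Fin r),
          ∑ f : Fin r → {x // x ∈ S}, ∑ g : Fin r → {x // x ∈ S},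
          (if ∀ i : {y // y ∈ x.1}, g (x.2 i) = f (i : Fin r) then
            ((∏ i ∈ x.1, ((f i : ℕ))) : ℝ) /
              (((∏ i, ((f i : ℕ))) : ℝ) * ((∏ i, ((g i : ℕ))) : ℝ)) else 0) := by
        rw [Finset.sum_congr rfl fun f (_ : f ∈ Finset.univ) => Finset.sum_comm, Finset.sum_comm]
    _ = ∑ x : Σ A : Finset (Fin r), ({y // y ∈ A} ↪ Fin r),
          ((∑ y : {x // x ∈ S}, (1 : ℝ) / ((y : ℕ) : ℝ)) ^ r *
           (∑ y : {x // x ∈ S}, (1 : ℝ) / ((y : ℕ) : ℝ)) ^ (r - x.1.card)) :=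
        Finset.sum_congr rfl fun x _ => inner_eval hSp x.1 x.2
    _ = ∑ A : Finset (Fin r), (Fintype.card ({y // y ∈ A} ↪ Fin r) : ℝ) *
          ((∑ y : {x // x ∈ S}, (1 : ℝ) / ((y : ℕ) : ℝ)) ^ r *
           (∑ y : {x // x ∈ S}, (1 : ℝ) / ((y : ℕ) : ℝ)) ^ (r - A.card)) := by
        rw [← Finset.univ_sigma_univ, Finset.sum_sigma]
        exact Finset.sum_congr rfl fun A _ => by
          simp only [Finset.sum_const, Finset.card_univ, nsmul_eq_mul]
    _ = ∑ j ∈ Finset.range (r + 1), ∑ A ∈ Finset.powersetCard j (Finset.univ : Finset (Fin r)),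
          (Fintype.card ({y // y ∈ A} ↪ Fin r) : ℝ) *
          ((∑ y : {x // x ∈ S}, (1 : ℝ) / ((y : ℕ) : ℝ)) ^ r *
           (∑ y : {x // x ∈ S}, (1 : ℝ) / ((y : ℕ) : ℝ)) ^ (r - A.card)) := by
        conv_lhs => rw [← Finset.powerset_univ]
        rw [Finset.sum_powerset]
        simp only [Finset.card_univ, Fintype.card_fin]
    _ = ∑ j ∈ Finset.range (r + 1), (r.choose j : ℝ) * ((r.descFactorial j : ℝ) *
          ((∑ x : {x // x ∈ S}, (1 : ℝ) / ((x : ℕ) : ℝ)) ^ r *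
           (∑ x : {x // x ∈ S}, (1 : ℝ) / ((x : ℕ) : ℝ)) ^ (r - j))) := by
        refine Finset.sum_congr rfl fun j hj => ?_
        have hcardA : ∀ A ∈ Finset.powersetCard j (Finset.univ : Finset (Fin r)),
            (Fintype.card ({y // y ∈ A} ↪ Fin r) : ℝ) *
            ((∑ y : {x // x ∈ S}, (1 : ℝ) / ((y : ℕ) : ℝ)) ^ r *
             (∑ y : {x // x ∈ S}, (1 : ℝ) / ((y : ℕ) : ℝ)) ^ (r - A.card))
            = (r.descFactorial j : ℝ) *
            ((∑ y : {x // x ∈ S}, (1 : ℝ) / ((y : ℕ) : ℝ)) ^ r *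
             (∑ y : {x // x ∈ S}, (1 : ℝ) / ((y : ℕ) : ℝ)) ^ (r - j)) := by
          intro A hA
          have hAc : A.card = j := (Finset.mem_powersetCard.mp hA).2
          rw [Fintype.card_embedding_eq, Fintype.card_coe, Fintype.card_fin, hAc]
        rw [Finset.sum_congr rfl hcardA, Finset.sum_const, Finset.card_powersetCard,
          Finset.card_univ, Fintype.card_fin, nsmul_eq_mul]

lemma final_bound (P : ℝ) (hP : 0 ≤ P) (r : ℕ) :
    (∑ j ∈ Finset.range (r + 1), (r.choose j : ℝ) * ((r.descFactorial j : ℝ) *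
        (P ^ r * P ^ (r - j))))
      ≤ 2 ^ r * (Nat.factorial r : ℝ) * P ^ r * Real.exp P := by
  have h1 : ∀ j ∈ Finset.range (r + 1), (r.choose j : ℝ) * ((r.descFactorial j : ℝ) *
      (P ^ r * P ^ (r - j)))
      ≤ ((2 : ℝ) ^ r * (Nat.factorial r : ℝ) * P ^ r) *
          (P ^ (r - j) / (Nat.factorial (r - j) : ℝ)) := by
    intro j hj
    have hjr : j ≤ r := Nat.lt_succ_iff.mp (Finset.mem_range.mp hj)
    have hc2 : (r.choose j : ℝ) ≤ 2 ^ r := by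
      have hle : r.choose j ≤ 2 ^ r := by
        rw [← Nat.sum_range_choose r]
        exact Finset.single_le_sum (f := fun i => r.choose i) (fun i _ => Nat.zero_le _) hj
      exact_mod_cast hle
    have hdesc : (r.descFactorial j : ℕ) * (Nat.factorial (r - j)) = Nat.factorial r := by
      rw [Nat.descFactorial_eq_factorial_mul_choose, mul_comm (Nat.factorial j) (r.choose j),
        mul_assoc]
      rw [show Nat.factorial j * Nat.factorial (r - j)
          = Nat.factorial j * Nat.factorial (r - j) from rfl]
      have := Nat.choose_mul_factorial_mul_factorial hjr
      rw [← this]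
      ring
    have hfne : (0:ℝ) < (Nat.factorial (r - j) : ℝ) := by
      exact_mod_cast Nat.factorial_pos (r - j)
    have hdesc' : (r.descFactorial j : ℝ) = (Nat.factorial r : ℝ) / (Nat.factorial (r - j) : ℝ) := by
      rw [eq_div_iff hfne.ne']
      exact_mod_cast hdesc
    rw [hdesc']
    have hrw : (2:ℝ) ^ r * (Nat.factorial r : ℝ) * P ^ r *
        (P ^ (r - j) / (Nat.factorial (r - j) : ℝ))
        = 2 ^ r * ((Nat.factorial r : ℝ) / (Nat.factorial (r - j) : ℝ) * (P ^ r * P ^ (r - j))) := by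
      field_simp
    rw [hrw]
    refine mul_le_mul_of_nonneg_right hc2 ?_
    positivity
  calc (∑ j ∈ Finset.range (r + 1), (r.choose j : ℝ) * ((r.descFactorial j : ℝ) *
        (P ^ r * P ^ (r - j))))
      ≤ ∑ j ∈ Finset.range (r + 1), ((2 : ℝ) ^ r * (Nat.factorial r : ℝ) * P ^ r) *
          (P ^ (r - j) / (Nat.factorial (r - j) : ℝ)) := Finset.sum_le_sum h1
    _ = ((2 : ℝ) ^ r * (Nat.factorial r : ℝ) * P ^ r) *
          ∑ j ∈ Finset.range (r + 1), (P ^ (r - j) / (Nat.factorial (r - j) : ℝ)) := by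
        rw [Finset.mul_sum]
    _ ≤ ((2 : ℝ) ^ r * (Nat.factorial r : ℝ) * P ^ r) * Real.exp P := by
        refine mul_le_mul_of_nonneg_left ?_ (by positivity)
        have hrefl := Finset.sum_range_reflect (fun i => P ^ i / (Nat.factorial i : ℝ)) (r + 1)
        have : (∑ j ∈ Finset.range (r + 1), (P ^ (r - j) / (Nat.factorial (r - j) : ℝ)))
            = ∑ j ∈ Finset.range (r + 1), P ^ j / (Nat.factorial j : ℝ) := by
          rw [← hrefl]
          exact Finset.sum_congr rfl fun j hj => by norm_num
        rw [this]
        exact Real.sum_le_exp_of_nonneg hP (r + 1)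
    _ = 2 ^ r * (Nat.factorial r : ℝ) * P ^ r * Real.exp P := rfl

end Assemble

/-- combinatorial sum bound `∑ r!² g(m) g(n) / lcm(m,n) ≤ 2^r r! P_v^r e^{P_v}`. -/
theorem stmt_18 :
    ∃ T₀ : ℝ, ∀ T : ℝ, T₀ ≤ T → ∀ L : ℕ, IsLargestIterLogIndex T L →
      ∀ v : ℕ, 2 ≤ v → v ≤ L → ∀ r : ℕ,
        (∑' q : ℕ × ℕ,
            if 1 ≤ q.1 ∧ 1 ≤ q.2 ∧ (∀ p : ℕ, p.Prime → p ∣ q.1 → InRange T v p) ∧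
                (∀ p : ℕ, p.Prime → p ∣ q.2 → InRange T v p) ∧
                Omega q.1 = r ∧ Omega q.2 = r
            then (Nat.factorial r : ℝ) ^ (2 : ℕ) * gfun q.1 * gfun q.2 / (Nat.lcm q.1 q.2 : ℝ)
            else 0)
          ≤ 2 ^ r * (Nat.factorial r : ℝ) * Pv T v ^ r * Real.exp (Pv T v) := by
  refine ⟨0, fun T _ L _ v _ _ r => ?_⟩
  set B : ℕ := ⌈Tseq T v⌉₊ + 1 with hB
  set S : Finset ℕ := (Finset.range B).filter (fun p => p.Prime ∧ InRange T v p) with hSdef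
  have hmemS : ∀ p : ℕ, p ∈ S ↔ (p.Prime ∧ InRange T v p) := by
    intro p
    rw [hSdef, Finset.mem_filter, Finset.mem_range]
    constructor
    · exact fun h => h.2
    · intro h
      refine ⟨?_, h⟩
      have h2 : (p : ℝ) < Tseq T v := h.2.2
      have h3 : (p : ℝ) < (B : ℝ) := by
        rw [hB]
        push_cast
        have := Nat.le_ceil (Tseq T v)
        linarith
      exact_mod_cast h3
  have hSp : ∀ p ∈ S, p.Prime := fun p hp => ((hmemS p).mp hp).1
  have hSB : ∀ p ∈ S, p ≤ B := by
    intro p hp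
    rw [hSdef, Finset.mem_filter, Finset.mem_range] at hp
    omega
  have hPv : Pv T v = ∑ p ∈ S, (1 : ℝ) / p := by
    rw [Pv, tsum_eq_sum (s := S) (fun p hp => if_neg fun hc => hp ((hmemS p).mpr hc))]
    exact Finset.sum_congr rfl fun p hp => if_pos ((hmemS p).mp hp)
  have hPnn : 0 ≤ Pv T v := by
    rw [hPv]
    positivity
  have hPsub : (∑ x : {x // x ∈ S}, (1 : ℝ) / ((x : ℕ) : ℝ)) = Pv T v := by
    rw [hPv]
    exact Finset.sum_coe_sort S (fun p => (1 : ℝ) / p)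
  have hcondiff : ∀ m : ℕ, (1 ≤ m ∧ (∀ p : ℕ, p.Prime → p ∣ m → InRange T v p) ∧ Omega m = r)
      ↔ CondS S r m := by
    intro m
    constructor
    · rintro ⟨h1, h2, h3⟩
      exact ⟨h1, fun p hp hpd => (hmemS p).mpr ⟨hp, h2 p hp hpd⟩, h3⟩
    · rintro ⟨h1, h2, h3⟩
      exact ⟨h1, fun p hp hpd => ((hmemS p).mp (h2 p hp hpd)).2, h3⟩
  have hbound : ∀ m, CondS S r m → m ≤ B ^ r := fun m hm => condS_le hSB hm
  have hsupport : ∀ q : ℕ × ℕ, q ∉ (Finset.Icc 1 (B ^ r) ×ˢ Finset.Icc 1 (B ^ r)) →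
      (if 1 ≤ q.1 ∧ 1 ≤ q.2 ∧ (∀ p : ℕ, p.Prime → p ∣ q.1 → InRange T v p) ∧
          (∀ p : ℕ, p.Prime → p ∣ q.2 → InRange T v p) ∧ Omega q.1 = r ∧ Omega q.2 = r
        then (Nat.factorial r : ℝ) ^ (2 : ℕ) * gfun q.1 * gfun q.2 / (Nat.lcm q.1 q.2 : ℝ)
        else 0) = 0 := by
    intro q hq
    refine if_neg fun hc => hq ?_
    obtain ⟨h1, h2, h3, h4, h5, h6⟩ := hc
    have hm : CondS S r q.1 := (hcondiff q.1).mp ⟨h1, h3, h5⟩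
    have hn : CondS S r q.2 := (hcondiff q.2).mp ⟨h2, h4, h6⟩
    exact Finset.mem_product.mpr ⟨Finset.mem_Icc.mpr ⟨h1, hbound _ hm⟩,
      Finset.mem_Icc.mpr ⟨h2, hbound _ hn⟩⟩
  set F0 : ℕ → ℝ := fun m => ∑ n ∈ Finset.Icc 1 (B ^ r),
    if CondS S r n then (Nat.factorial r : ℝ) * gfun n *
      ((Nat.gcd m n : ℝ) / ((m : ℝ) * (n : ℝ))) else 0 with hF0
  have hInner : ∀ m ∈ Finset.Icc 1 (B ^ r),
      (∑ n ∈ Finset.Icc 1 (B ^ r),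
        if 1 ≤ m ∧ 1 ≤ n ∧ (∀ p : ℕ, p.Prime → p ∣ m → InRange T v p) ∧
            (∀ p : ℕ, p.Prime → p ∣ n → InRange T v p) ∧ Omega m = r ∧ Omega n = r
          then (Nat.factorial r : ℝ) ^ (2 : ℕ) * gfun m * gfun n / (Nat.lcm m n : ℝ)
          else 0)
      = if CondS S r m then (Nat.factorial r : ℝ) * gfun m * F0 m else 0 := by
    intro m _
    by_cases hm : CondS S r m
    · rw [if_pos hm, hF0]
      simp only []
      rw [Finset.mul_sum]
      refine Finset.sum_congr rfl fun n _ => ?_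
      by_cases hn : CondS S r n
      · have hc1 := (hcondiff m).mpr hm
        have hc2 := (hcondiff n).mpr hn
        rw [if_pos ⟨hc1.1, hc2.1, hc1.2.1, hc2.2.1, hc1.2.2, hc2.2.2⟩, if_pos hn]
        have hmpos : (0:ℝ) < m := by exact_mod_cast hm.1
        have hnpos : (0:ℝ) < n := by exact_mod_cast hn.1
        have hlcmpos : (0:ℝ) < (Nat.lcm m n : ℝ) := by
          exact_mod_cast Nat.lcm_pos hm.1 hn.1
        have hmn : ((Nat.gcd m n : ℝ)) * (Nat.lcm m n : ℝ) = (m : ℝ) * n := by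
          exact_mod_cast Nat.gcd_mul_lcm m n
        have hgl : (Nat.gcd m n : ℝ) / ((m:ℝ) * n) = 1 / (Nat.lcm m n : ℝ) := by
          rw [div_eq_div_iff (by positivity) hlcmpos.ne', hmn, one_mul]
        rw [hgl, pow_two]
        ring
      · rw [if_neg (fun hc => hn ((hcondiff n).mp ⟨hc.2.1, hc.2.2.2.1, hc.2.2.2.2.2⟩)),
          if_neg hn, mul_zero]
    · rw [if_neg hm]
      refine Finset.sum_eq_zero fun n _ => ?_
      exact if_neg (fun hc => hm ((hcondiff m).mp ⟨hc.1, hc.2.2.1, hc.2.2.2.2.1⟩))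
  have hInner2 : ∀ f : Fin r → {x // x ∈ S},
      F0 (∏ i, ((f i : ℕ)))
      = ∑ g : Fin r → {x // x ∈ S},
          ((Nat.gcd (∏ i, ((f i : ℕ))) (∏ i, ((g i : ℕ))) : ℝ) /
            ((((∏ i, ((f i : ℕ))) : ℕ) : ℝ) * (((∏ i, ((g i : ℕ))) : ℕ) : ℝ))) := by
    intro f
    rw [hF0]
    exact tuple_expand hSp r (B ^ r) hbound
      (fun n => ((Nat.gcd (∏ i, ((f i : ℕ))) n : ℝ) /
        ((((∏ i, ((f i : ℕ))) : ℕ) : ℝ) * (n : ℝ))))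
  calc (∑' q : ℕ × ℕ,
          if 1 ≤ q.1 ∧ 1 ≤ q.2 ∧ (∀ p : ℕ, p.Prime → p ∣ q.1 → InRange T v p) ∧
              (∀ p : ℕ, p.Prime → p ∣ q.2 → InRange T v p) ∧
              Omega q.1 = r ∧ Omega q.2 = r
          then (Nat.factorial r : ℝ) ^ (2 : ℕ) * gfun q.1 * gfun q.2 / (Nat.lcm q.1 q.2 : ℝ)
          else 0)
      = ∑ q ∈ Finset.Icc 1 (B ^ r) ×ˢ Finset.Icc 1 (B ^ r),
          (if 1 ≤ q.1 ∧ 1 ≤ q.2 ∧ (∀ p : ℕ, p.Prime → p ∣ q.1 → InRange T v p) ∧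
              (∀ p : ℕ, p.Prime → p ∣ q.2 → InRange T v p) ∧
              Omega q.1 = r ∧ Omega q.2 = r
          then (Nat.factorial r : ℝ) ^ (2 : ℕ) * gfun q.1 * gfun q.2 / (Nat.lcm q.1 q.2 : ℝ)
          else 0) := tsum_eq_sum hsupport
    _ = ∑ m ∈ Finset.Icc 1 (B ^ r), ∑ n ∈ Finset.Icc 1 (B ^ r),
          (if 1 ≤ m ∧ 1 ≤ n ∧ (∀ p : ℕ, p.Prime → p ∣ m → InRange T v p) ∧
              (∀ p : ℕ, p.Prime → p ∣ n → InRange T v p) ∧ Omega m = r ∧ Omega n = r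
          then (Nat.factorial r : ℝ) ^ (2 : ℕ) * gfun m * gfun n / (Nat.lcm m n : ℝ)
          else 0) := Finset.sum_product _ _ _
    _ = ∑ m ∈ Finset.Icc 1 (B ^ r),
          (if CondS S r m then (Nat.factorial r : ℝ) * gfun m * F0 m else 0) :=
        Finset.sum_congr rfl hInner
    _ = ∑ f : Fin r → {x // x ∈ S}, F0 (∏ i, ((f i : ℕ))) :=
        tuple_expand hSp r (B ^ r) hbound F0
    _ = ∑ f : Fin r → {x // x ∈ S}, ∑ g : Fin r → {x // x ∈ S},
          ((Nat.gcd (∏ i, ((f i : ℕ))) (∏ i, ((g i : ℕ))) : ℝ) /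
            ((((∏ i, ((f i : ℕ))) : ℕ) : ℝ) * (((∏ i, ((g i : ℕ))) : ℕ) : ℝ))) :=
        Finset.sum_congr rfl fun f _ => hInner2 f
    _ = ∑ f : Fin r → {x // x ∈ S}, ∑ g : Fin r → {x // x ∈ S},
          ((Nat.gcd (∏ i, ((f i : ℕ))) (∏ i, ((g i : ℕ))) : ℝ) /
            (((∏ i, ((f i : ℕ))) : ℝ) * ((∏ i, ((g i : ℕ))) : ℝ))) := by
        refine Finset.sum_congr rfl fun f _ => Finset.sum_congr rfl fun g _ => ?_
        rw [Nat.cast_prod, Nat.cast_prod]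
    _ ≤ ∑ j ∈ Finset.range (r + 1), (r.choose j : ℝ) * ((r.descFactorial j : ℝ) *
          ((∑ x : {x // x ∈ S}, (1 : ℝ) / ((x : ℕ) : ℝ)) ^ r *
           (∑ x : {x // x ∈ S}, (1 : ℝ) / ((x : ℕ) : ℝ)) ^ (r - j))) := pair_sum_le hSp r
    _ = ∑ j ∈ Finset.range (r + 1), (r.choose j : ℝ) * ((r.descFactorial j : ℝ) *
          ((Pv T v) ^ r * (Pv T v) ^ (r - j))) := by rw [hPsub]
    _ ≤ 2 ^ r * (Nat.factorial r : ℝ) * Pv T v ^ r * Real.exp (Pv T v) :=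
        final_bound (Pv T v) hPnn r
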